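/- Let R be a commutative ring with unity having no non-trivial idempotent and such that the clean graph Cl(R) is finite. Then: (i) if |U(R)| = 1, then sdim(Cl(R)) = 1; (ii) if |U(R)| ≥ 2, then sdim(Cl(R)) = 2|U(R)| − 2. -/

import Mathlib

/-!
Since `R` has no non-trivial idempotents, the vertices of `Cl(R)` are the pairs `(0, u)` and
`(1, u)`. Each `(0, u)` is adjacent to every other vertex, so `Cl(R)` has diameter at most `2`,
while `(1, u)` and `(1, v)` are adjacent exactly when `u v = 1`. Consequently a pair of vertices
with the same idempotent is strongly resolved only by its own endpoints: a third resolver `w`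
would force `(e, u) ~ (e, v) ~ w ≁ (e, u)`, hence `e = 1`, `w = (1, v⁻¹) = (1, u)`.
A strong resolving set therefore misses at most one vertex in each of the two fibres, giving
`sdim ≥ 2|U(R)| - 2`; conversely all vertices `(e, u)` with `u ≠ 1` form a strong resolving set,
the one remaining pair `(0, 1), (1, 1)` being resolved by any `(1, c)` with `c ≠ 1`.
When `|U(R)| = 1` the graph is a single edge and `sdim = 1`.
-/

variable {V : Type*}

/-- In a graph `G`, `u` is maximally distant from `v` if `d(v,w) ≤ d(u,v)` for every
neighbour `w` of `u`. -/
def IsMaxDistFrom (G : SimpleGraph V) (u v : V) : Prop :=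
  ∀ w ∈ G.neighborSet u, G.dist v w ≤ G.dist u v

/-- `u` and `v` are mutually maximally distant in `G`. -/
def IsMMD (G : SimpleGraph V) (u v : V) : Prop :=
  IsMaxDistFrom G u v ∧ IsMaxDistFrom G v u

/-- The boundary of a graph: the set of vertices that are mutually maximally distant
from some other vertex.  This is the vertex set of the strong resolving graph. -/
def graphBoundary (G : SimpleGraph V) : Set V :=
  {u | ∃ v, u ≠ v ∧ IsMMD G u v}

/-- The strong resolving graph, realised on the full vertex set (vertices outside the
boundary are isolated): two distinct vertices are adjacent iff they are mutually
maximally distant. -/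
def srGraph (G : SimpleGraph V) : SimpleGraph V where
  Adj u v := u ≠ v ∧ IsMMD G u v
  symm := ⟨fun u v h => ⟨h.1.symm, h.2.2, h.2.1⟩⟩
  loopless := ⟨fun u h => h.1 rfl⟩

/-- The independence number of a graph: the largest cardinality of a finite set of
pairwise non-adjacent vertices. -/
noncomputable def indNum (G : SimpleGraph V) : ℕ :=
  sSup {n | ∃ s : Finset V, ((s : Set V).Pairwise fun a b => ¬ G.Adj a b) ∧ s.card = n}

/-- `S` is a strong resolving set of `G`: every pair of distinct vertices `u, v` is
strongly resolved by some `w ∈ S`, i.e. `v` lies on a shortest `u`-`w` path or `u` lies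
on a shortest `v`-`w` path. -/
def IsStrongResolvingSet (G : SimpleGraph V) (S : Set V) : Prop :=
  ∀ u v : V, u ≠ v → ∃ w ∈ S,
    G.dist u w = G.dist u v + G.dist v w ∨ G.dist v w = G.dist v u + G.dist u w

/-- The strong metric dimension of a graph: the smallest cardinality of a (finite)
strong resolving set. -/
noncomputable def sdim (G : SimpleGraph V) : ℕ :=
  sInf {n | ∃ S : Finset V, IsStrongResolvingSet G (S : Set V) ∧ S.card = n}

/-- Vertices of the clean graph: pairs `(e, u)` with `e` an idempotent and `u` a unit. -/
abbrev CleanVtx (R : Type*) [CommRing R] : Type _ := {e : R // IsIdempotentElem e} × Rˣ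

/-- The clean graph `Cl(R)` of a commutative ring `R`: distinct vertices `(e,u)`, `(f,v)`
are adjacent iff `e * f = 0` or `u * v = 1`. -/
def cleanGraph (R : Type*) [CommRing R] : SimpleGraph (CleanVtx R) where
  Adj x y := x ≠ y ∧ ((x.1 : R) * (y.1 : R) = 0 ∨ (x.2 : R) * (y.2 : R) = 1)
  symm := by
    constructor
    rintro x y ⟨hxy, h | h⟩
    · exact ⟨hxy.symm, Or.inl (by rwa [mul_comm])⟩
    · exact ⟨hxy.symm, Or.inr (by rwa [mul_comm])⟩
  loopless := ⟨fun x h => h.1 rfl⟩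

/-- The vertex set of `Cl₂(R)`: clean vertices `(e,u)` with `e ≠ 0`. -/
def clean2Set (R : Type*) [CommRing R] : Set (CleanVtx R) := {x | (x.1 : R) ≠ 0}

/-- `Cl₂(R)`, the subgraph of `Cl(R)` induced on the vertices `(e,u)` with `e ≠ 0`. -/
def clean2Graph (R : Type*) [CommRing R] : SimpleGraph (clean2Set R) :=
  SimpleGraph.induce (clean2Set R) (cleanGraph R)

/-- `U''(R)`: the set of units `u` with `u² ≠ 1`. -/
def uSecond (R : Type*) [CommRing R] : Set Rˣ := {u | (u : R) * (u : R) ≠ 1}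

/-- `|Id(R)*|`: the number of non-trivial idempotents of `R`. -/
noncomputable def idStarNum (R : Type*) [CommRing R] : ℕ :=
  {e : R | IsIdempotentElem e ∧ e ≠ 0 ∧ e ≠ 1}.ncard

/-- `|Id⊥(R)*|`: the maximum cardinality of a set of nonzero pairwise orthogonal
idempotents of `R`. -/
noncomputable def orthIdemNum (R : Type*) [CommRing R] : ℕ :=
  sSup {n | ∃ s : Finset R, (∀ e ∈ s, IsIdempotentElem e ∧ e ≠ 0) ∧
    ((s : Set R).Pairwise fun e f => e * f = 0) ∧ s.card = n}

section StrongResolving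

variable {G : SimpleGraph V} {u v w : V}

def StronglyResolves (G : SimpleGraph V) (w u v : V) : Prop :=
  G.dist u w = G.dist u v + G.dist v w ∨ G.dist v w = G.dist v u + G.dist u w

lemma stronglyResolves_left (u v : V) : StronglyResolves G u u v :=
  Or.inr (by rw [SimpleGraph.dist_self, add_zero])

lemma stronglyResolves_right (u v : V) : StronglyResolves G v u v :=
  Or.inl (by rw [SimpleGraph.dist_self, add_zero])

lemma StronglyResolves.symm (h : StronglyResolves G w u v) : StronglyResolves G w v u :=
  Or.symm h

lemma isStrongResolvingSet_of_forall_notMem {S : Set V}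
    (h : ∀ u ∉ S, ∀ v ∉ S, u ≠ v → ∃ w ∈ S, StronglyResolves G w u v) :
    IsStrongResolvingSet G S := by
  intro u v huv
  by_cases hu : u ∈ S
  · exact ⟨u, hu, stronglyResolves_left u v⟩
  by_cases hv : v ∈ S
  · exact ⟨v, hv, stronglyResolves_right u v⟩
  exact h u hu v hv huv

lemma IsStrongResolvingSet.nonempty [Nontrivial V] {S : Set V}
    (hS : IsStrongResolvingSet G S) : S.Nonempty := by
  obtain ⟨u, v, huv⟩ := exists_pair_ne V
  obtain ⟨w, hw, -⟩ := hS u v huv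
  exact ⟨w, hw⟩

lemma sdim_eq_ncard {S : Set V} (hfin : S.Finite) (hS : IsStrongResolvingSet G S)
    (hmin : ∀ T : Finset V, IsStrongResolvingSet G T → S.ncard ≤ T.card) :
    sdim G = S.ncard := by
  have hmem : S.ncard ∈ {n | ∃ T : Finset V, IsStrongResolvingSet G T ∧ T.card = n} :=
    ⟨hfin.toFinset, by simpa using hS, (Set.ncard_eq_toFinset_card S hfin).symm⟩
  refine le_antisymm (Nat.sInf_le hmem) (le_csInf ⟨_, hmem⟩ ?_)
  rintro _ ⟨T, hT, rfl⟩
  exact hmin T hT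

end StrongResolving

namespace SimpleGraph

variable {G : SimpleGraph V} {c u v w : V}

lemma connected_of_forall_ne_adj (hc : ∀ x, c ≠ x → G.Adj c x) : G.Connected :=
  G.connected_iff_exists_forall_reachable.mpr ⟨c, fun x => by
    by_cases h : c = x
    · exact h ▸ Reachable.refl c
    · exact (hc x h).reachable⟩

lemma dist_le_two_of_forall_ne_adj (hc : ∀ x, c ≠ x → G.Adj c x) (u v : V) :
    G.dist u v ≤ 2 := by
  have hc₁ : ∀ x, G.dist c x ≤ 1 := fun x => by
    by_cases h : c = x
    · simp [h]
    · exact (dist_eq_one_iff_adj.mpr (hc x h)).le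
  calc G.dist u v ≤ G.dist u c + G.dist c v := (connected_of_forall_ne_adj hc).dist_triangle
    _ ≤ 1 + 1 := add_le_add (dist_comm ▸ hc₁ u) (hc₁ v)

lemma Connected.dist_eq_two_of_not_adj (hG : G.Connected) (h₂ : G.dist u v ≤ 2) (huv : u ≠ v)
    (h : ¬ G.Adj u v) : G.dist u v = 2 := by
  have := hG.pos_dist_of_ne huv
  have : G.dist u v ≠ 1 := fun h₁ => h (dist_eq_one_iff_adj.mp h₁)
  omega

lemma Connected.adj_of_dist_eq_add (hG : G.Connected) (h₂ : G.dist u w ≤ 2) (huv : u ≠ v)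
    (hvw : v ≠ w) (h : G.dist u w = G.dist u v + G.dist v w) :
    G.Adj u v ∧ G.Adj v w ∧ ¬ G.Adj u w := by
  have := hG.pos_dist_of_ne huv
  have := hG.pos_dist_of_ne hvw
  refine ⟨dist_eq_one_iff_adj.mp (by omega), dist_eq_one_iff_adj.mp (by omega), fun huw => ?_⟩
  rw [dist_eq_one_iff_adj.mpr huw] at h
  omega

end SimpleGraph

section CleanGraph

open SimpleGraph

variable {R : Type*} [CommRing R]

lemma idempotents_zero_ne_one [Nontrivial R] : (0 : {e : R // IsIdempotentElem e}) ≠ 1 :=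
  fun h => zero_ne_one (congrArg Subtype.val h)

instance [Nontrivial R] : Nontrivial {e : R // IsIdempotentElem e} :=
  ⟨⟨0, 1, idempotents_zero_ne_one⟩⟩

lemma idempotent_eq_zero_or_one (hid : ∀ e : R, IsIdempotentElem e → e = 0 ∨ e = 1)
    (e : {e : R // IsIdempotentElem e}) : e = 0 ∨ e = 1 :=
  (hid e e.2).imp Subtype.ext Subtype.ext

lemma card_idempotents_eq_two [Nontrivial R]
    (hid : ∀ e : R, IsIdempotentElem e → e = 0 ∨ e = 1) :
    Nat.card {e : R // IsIdempotentElem e} = 2 :=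
  Nat.card_eq_two_iff.mpr ⟨0, 1, idempotents_zero_ne_one, Set.eq_univ_of_forall fun e => by
    rcases idempotent_eq_zero_or_one hid e with rfl | rfl <;> simp⟩

lemma finite_idempotents [Nontrivial R] (hid : ∀ e : R, IsIdempotentElem e → e = 0 ∨ e = 1) :
    Finite {e : R // IsIdempotentElem e} :=
  Nat.finite_of_card_ne_zero (by simp [card_idempotents_eq_two hid])

lemma eq_zero_one_or_eq_one_one (hid : ∀ e : R, IsIdempotentElem e → e = 0 ∨ e = 1)
    {x : CleanVtx R} (hx : x.2 = 1) : x = (0, 1) ∨ x = (1, 1) :=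
  (idempotent_eq_zero_or_one hid x.1).imp (Prod.ext · hx) (Prod.ext · hx)

lemma cleanGraph_adj_of_fst_eq_zero {x y : CleanVtx R} (hxy : x ≠ y) (hx : (x.1 : R) = 0) :
    (cleanGraph R).Adj x y :=
  ⟨hxy, Or.inl (by rw [hx, zero_mul])⟩

lemma cleanGraph_connected : (cleanGraph R).Connected :=
  connected_of_forall_ne_adj fun _ h => cleanGraph_adj_of_fst_eq_zero (x := (0, 1)) h rfl

lemma cleanGraph_dist_le_two (x y : CleanVtx R) : (cleanGraph R).dist x y ≤ 2 :=
  dist_le_two_of_forall_ne_adj (fun _ h => cleanGraph_adj_of_fst_eq_zero (x := (0, 1)) h rfl) x y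

lemma cleanGraph_units_mul_eq_one {x y : CleanVtx R} (h : (cleanGraph R).Adj x y)
    (hxy : (x.1 : R) * y.1 ≠ 0) : x.2 * y.2 = 1 :=
  Units.ext (h.2.resolve_left hxy)

lemma eq_of_dist_eq_add_of_fst_eq [Nontrivial R]
    (hid : ∀ e : R, IsIdempotentElem e → e = 0 ∨ e = 1)
    {u v w : CleanVtx R} (hfst : u.1 = v.1) (huv : u ≠ v) (hvw : v ≠ w)
    (h : (cleanGraph R).dist u w = (cleanGraph R).dist u v + (cleanGraph R).dist v w) :
    w = u := by
  by_contra hwu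
  obtain ⟨hadj_uv, hadj_vw, hnadj_uw⟩ :=
    cleanGraph_connected.adj_of_dist_eq_add (cleanGraph_dist_le_two u w) huv hvw h
  have hu : (u.1 : R) = 1 := (hid _ u.1.2).resolve_left fun h0 =>
    hnadj_uw (cleanGraph_adj_of_fst_eq_zero (Ne.symm hwu) h0)
  have hw : (w.1 : R) = 1 := (hid _ w.1.2).resolve_left fun h0 =>
    hnadj_uw (cleanGraph_adj_of_fst_eq_zero hwu h0).symm
  have hv : (v.1 : R) = 1 := hfst ▸ hu
  have huv₂ := cleanGraph_units_mul_eq_one hadj_uv (by simp [hu, hv])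
  have hvw₂ := cleanGraph_units_mul_eq_one hadj_vw (by simp [hv, hw])
  exact hwu (Prod.ext (Subtype.ext (hw.trans hu.symm))
    ((inv_eq_of_mul_eq_one_right hvw₂).symm.trans (eq_inv_of_mul_eq_one_left huv₂).symm))

lemma eq_or_eq_of_stronglyResolves_of_fst_eq [Nontrivial R]
    (hid : ∀ e : R, IsIdempotentElem e → e = 0 ∨ e = 1) {u v w : CleanVtx R}
    (hfst : u.1 = v.1) (huv : u ≠ v) (h : StronglyResolves (cleanGraph R) w u v) :
    w = u ∨ w = v := by
  by_contra! hw
  rcases h with h | h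
  · exact hw.1 (eq_of_dist_eq_add_of_fst_eq hid hfst huv (Ne.symm hw.2) h)
  · exact hw.2 (eq_of_dist_eq_add_of_fst_eq hid hfst.symm huv.symm (Ne.symm hw.1) h)

lemma IsStrongResolvingSet.injOn_fst_compl [Nontrivial R]
    (hid : ∀ e : R, IsIdempotentElem e → e = 0 ∨ e = 1) {S : Set (CleanVtx R)}
    (hS : IsStrongResolvingSet (cleanGraph R) S) : Set.InjOn Prod.fst Sᶜ := by
  intro u hu v hv hfst
  by_contra huv
  obtain ⟨w, hw, hres⟩ := hS u v huv
  rcases eq_or_eq_of_stronglyResolves_of_fst_eq hid hfst huv hres with rfl | rfl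
  exacts [hu hw, hv hw]

lemma IsStrongResolvingSet.two_mul_card_units_sub_two_le [Nontrivial R] [Finite Rˣ]
    (hid : ∀ e : R, IsIdempotentElem e → e = 0 ∨ e = 1) {S : Set (CleanVtx R)}
    (hS : IsStrongResolvingSet (cleanGraph R) S) : 2 * Nat.card Rˣ - 2 ≤ S.ncard := by
  have hidem := card_idempotents_eq_two hid
  have := finite_idempotents hid
  have hcompl : Sᶜ.ncard ≤ 2 :=
    calc Sᶜ.ncard = (Prod.fst '' Sᶜ).ncard := (hS.injOn_fst_compl hid).ncard_image.symm
      _ ≤ 2 := hidem ▸ Set.ncard_le_card _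
  have hsum := Set.ncard_add_ncard_compl S
  rw [Nat.card_prod, hidem] at hsum
  omega

lemma stronglyResolves_cleanGraph_zero_one [Nontrivial R] {c : Rˣ} (hc : c ≠ 1) :
    StronglyResolves (cleanGraph R) (1, c) (0, 1) (1, 1) := by
  have hnadj : ¬ (cleanGraph R).Adj (1, 1) (1, c) := fun h =>
    hc (by simpa using cleanGraph_units_mul_eq_one h (by simp))
  have hne (a b : Rˣ) : ((0, a) : CleanVtx R) ≠ (1, b) := fun h =>
    idempotents_zero_ne_one (congrArg Prod.fst h)
  have h₁ : (cleanGraph R).dist (1, 1) (0, 1) = 1 :=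
    dist_eq_one_iff_adj.mpr (cleanGraph_adj_of_fst_eq_zero (hne 1 1) rfl).symm
  have h₂ : (cleanGraph R).dist (0, 1) (1, c) = 1 :=
    dist_eq_one_iff_adj.mpr (cleanGraph_adj_of_fst_eq_zero (hne 1 c) rfl)
  right
  rw [h₁, h₂, cleanGraph_connected.dist_eq_two_of_not_adj (cleanGraph_dist_le_two _ _)
    (by simpa using hc.symm) hnadj]

lemma sdim_cleanGraph_of_card_units_eq_one [Nontrivial R]
    (hid : ∀ e : R, IsIdempotentElem e → e = 0 ∨ e = 1) (h : Nat.card Rˣ = 1) :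
    sdim (cleanGraph R) = 1 := by
  have : Subsingleton Rˣ := (Nat.card_eq_one_iff_unique.mp h).1
  have hS : IsStrongResolvingSet (cleanGraph R) {(0, 1)} := by
    refine isStrongResolvingSet_of_forall_notMem fun u hu v hv huv => absurd ?_ huv
    rcases eq_zero_one_or_eq_one_one hid (Subsingleton.elim u.2 1) with rfl | rfl
    · exact absurd rfl hu
    rcases eq_zero_one_or_eq_one_one hid (Subsingleton.elim v.2 1) with rfl | rfl
    · exact absurd rfl hv
    rfl
  have hmin (T : Finset (CleanVtx R)) (hT : IsStrongResolvingSet (cleanGraph R) T) :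
      ({(0, 1)} : Set (CleanVtx R)).ncard ≤ T.card := by
    rw [Set.ncard_singleton]
    exact Finset.card_pos.mpr (Finset.coe_nonempty.mp hT.nonempty)
  rw [sdim_eq_ncard (Set.finite_singleton _) hS hmin, Set.ncard_singleton]

lemma sdim_cleanGraph_of_two_le_card_units [Nontrivial R]
    (hid : ∀ e : R, IsIdempotentElem e → e = 0 ∨ e = 1) (h : 2 ≤ Nat.card Rˣ) :
    sdim (cleanGraph R) = 2 * Nat.card Rˣ - 2 := by
  have : Finite Rˣ := Nat.finite_of_card_ne_zero (by omega)
  have : Nontrivial Rˣ := Finite.one_lt_card_iff_nontrivial.mp h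
  have := finite_idempotents hid
  let S : Set (CleanVtx R) := Set.univ ×ˢ {1}ᶜ
  have hS : IsStrongResolvingSet (cleanGraph R) S := by
    refine isStrongResolvingSet_of_forall_notMem fun u hu v hv huv => ?_
    obtain ⟨c, hc⟩ := exists_ne (1 : Rˣ)
    refine ⟨(1, c), by simpa [S] using hc, ?_⟩
    rcases eq_zero_one_or_eq_one_one hid (by simpa [S] using hu) with rfl | rfl <;>
      rcases eq_zero_one_or_eq_one_one hid (by simpa [S] using hv) with rfl | rfl
    exacts [absurd rfl huv, stronglyResolves_cleanGraph_zero_one hc,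
      (stronglyResolves_cleanGraph_zero_one hc).symm, absurd rfl huv]
  have hcard : S.ncard = 2 * Nat.card Rˣ - 2 := by
    rw [Set.ncard_prod, Set.ncard_univ, card_idempotents_eq_two hid, Set.ncard_compl,
      Set.ncard_singleton]
    omega
  have hmin (T : Finset (CleanVtx R)) (hT : IsStrongResolvingSet (cleanGraph R) T) :
      S.ncard ≤ T.card :=
    hcard ▸ Set.ncard_coe_finset T ▸ hT.two_mul_card_units_sub_two_le hid
  rw [sdim_eq_ncard S.toFinite hS hmin, hcard]

end CleanGraph

theorem statement_14_general (R : Type*) [CommRing R] [Nontrivial R]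
    (hid : ∀ e : R, IsIdempotentElem e → e = 0 ∨ e = 1) :
    (Nat.card Rˣ = 1 → sdim (cleanGraph R) = 1) ∧
    (2 ≤ Nat.card Rˣ → sdim (cleanGraph R) = 2 * Nat.card Rˣ - 2) :=
  ⟨sdim_cleanGraph_of_card_units_eq_one hid, sdim_cleanGraph_of_two_le_card_units hid⟩

theorem statement_14 (R : Type*) [CommRing R] [Nontrivial R]
    (hid : ∀ e : R, IsIdempotentElem e → e = 0 ∨ e = 1)
    (hfin : Finite (CleanVtx R)) :
    (Nat.card Rˣ = 1 → sdim (cleanGraph R) = 1) ∧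
    (2 ≤ Nat.card Rˣ → sdim (cleanGraph R) = 2 * Nat.card Rˣ - 2) :=
  statement_14_general R hid
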